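/- Fix k ≥ 1 and n ≥ 2, and consider the Algorithm 3 transition system. If in a configuration c₀ exactly one agent has label in {S, S'}, then in every configuration reachable from c₀ exactly one agent has label in {S, S'}. -/

import Mathlib

/-- Labels of Algorithm 3. -/
inductive Alg3.Label : Type
  | S | S' | R | u | ubar
deriving DecidableEq

/-- Agent state of Algorithm 3: a secret, a mask, and a label. -/
structure Alg3.AgentState (k : ℕ) : Type where
  secret : Option (ZMod k)
  mask : Option (ZMod k)
  label : Alg3.Label

/-- A configuration: the state of each of the `n` agents. -/
abbrev Alg3.Config (k n : ℕ) : Type := Fin n → Alg3.AgentState k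

open Alg3 in
/-- A single step of Algorithm 3 between a distinct initiator `i` and responder `j`. -/
inductive Alg3.Step (k n : ℕ) : Config k n → Config k n → Prop
  | r1 (c : Config k n) (i j : Fin n) (hij : i ≠ j) (σ : Option (ZMod k)) (r r' : ZMod k)
      (hi : c i = ⟨σ, some r, Label.S⟩) (hj : (c j).label = Label.ubar) :
      Step k n c (Function.update c i ⟨σ, some r', Label.S⟩)
  | r2 (c : Config k n) (i j : Fin n) (hij : i ≠ j) (μ r v : ZMod k) (ρj : Option (ZMod k))
      (hi : c i = ⟨some μ, some r, Label.S⟩) (hj : c j = ⟨some v, ρj, Label.u⟩) :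
      Step k n c (Function.update (Function.update c i ⟨none, some (μ - r), Label.S'⟩)
        j ⟨some (v + r), ρj, Label.R⟩)
  | r3 (c : Config k n) (i j : Fin n) (hij : i ≠ j) (x y : ZMod k) (ρj : Option (ZMod k))
      (hi : c i = ⟨none, some x, Label.S'⟩) (hj : c j = ⟨some y, ρj, Label.R⟩) :
      Step k n c (Function.update (Function.update c i ⟨none, none, Label.ubar⟩)
        j ⟨some (x + y), ρj, Label.S⟩)
  | r4 (c : Config k n) (i j : Fin n) (hij : i ≠ j) (hi : (c i).label = Label.ubar) :
      Step k n c (Function.update c i ⟨(c i).secret, (c i).mask, Label.u⟩)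

/-- Reachability: the reflexive–transitive closure of single steps. -/
def Alg3.Reachable (k n : ℕ) : Alg3.Config k n → Alg3.Config k n → Prop :=
  Relation.ReflTransGen (Alg3.Step k n)


/-! Every rule either leaves each agent's membership in `{S, S'}` unchanged or, in (R3), moves
it from the initiator to the responder, so the number of such agents never changes. -/

namespace Alg3

variable {k n : ℕ}

def IsSender (s : AgentState k) : Prop :=
  s.label = Label.S ∨ s.label = Label.S'

instance : DecidablePred (IsSender (k := k)) :=
  fun s => inferInstanceAs (Decidable (s.label = Label.S ∨ s.label = Label.S'))

def senders (c : Config k n) : Finset (Fin n) :=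
  Finset.univ.filter fun i => IsSender (c i)

@[simp]
theorem mem_senders {c : Config k n} {i : Fin n} : i ∈ senders c ↔ IsSender (c i) := by
  simp [senders]

theorem senders_update (c : Config k n) (i : Fin n) (s : AgentState k) :
    senders (Function.update c i s) =
      if IsSender s then insert i (senders c) else (senders c).erase i := by
  ext x
  by_cases hx : x = i <;> split_ifs <;> simp_all

theorem senders_update_of_isSender_iff {c : Config k n} {i : Fin n} {s : AgentState k}
    (h : IsSender s ↔ IsSender (c i)) : senders (Function.update c i s) = senders c := by
  ext x
  by_cases hx : x = i <;> simp_all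

theorem Step.card_senders_eq {c c' : Config k n} (h : Step k n c c') :
    (senders c').card = (senders c).card := by
  cases h with
  | r1 i j hij σ r r' hi hj =>
    rw [senders_update_of_isSender_iff (by simp [IsSender, hi])]
  | r2 i j hij μ r v ρj hi hj =>
    rw [senders_update_of_isSender_iff (by simp [IsSender, hj, Function.update_of_ne hij.symm]),
      senders_update_of_isSender_iff (by simp [IsSender, hi])]
  | r3 i j hij x y ρj hi hj =>
    have hi_mem : i ∈ senders c := by simp [IsSender, hi]
    have hj_not_mem : j ∉ (senders c).erase i := by simp [IsSender, hj]
    rw [senders_update, if_pos (by simp [IsSender]), senders_update, if_neg (by simp [IsSender]),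
      Finset.card_insert_of_notMem hj_not_mem, Finset.card_erase_add_one hi_mem]
  | r4 i j hij hi =>
    rw [senders_update_of_isSender_iff (by simp [IsSender, hi])]

theorem Reachable.card_senders_eq {c₀ c : Config k n} (h : Reachable k n c₀ c) :
    (senders c).card = (senders c₀).card := by
  induction h with
  | refl => rfl
  | tail _ hstep ih => exact hstep.card_senders_eq.trans ih

end Alg3

open Alg3 in
theorem stmt6_general (k n : ℕ) (c₀ c : Config k n)
    (h₀ : (Finset.univ.filter
        (fun i => (c₀ i).label = Label.S ∨ (c₀ i).label = Label.S')).card = 1)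
    (hreach : Reachable k n c₀ c) :
    (Finset.univ.filter
        (fun i => (c i).label = Label.S ∨ (c i).label = Label.S')).card = 1 :=
  hreach.card_senders_eq.trans h₀

open Alg3 in
/-- If exactly one agent has label in `{S, S'}` in `c₀`, then the same holds in every
configuration reachable from `c₀`. -/
theorem stmt6 (k n : ℕ) (hk : 1 ≤ k) (hn : 2 ≤ n)
    (c₀ c : Config k n)
    (h₀ : (Finset.univ.filter
        (fun i => (c₀ i).label = Label.S ∨ (c₀ i).label = Label.S')).card = 1)
    (hreach : Reachable k n c₀ c) :
    (Finset.univ.filter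
        (fun i => (c i).label = Label.S ∨ (c i).label = Label.S')).card = 1 :=
  stmt6_general k n c₀ c h₀ hreach
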